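/- Let m ≥ 3 and let n ≥ 4 be even. For every i with 0 ≤ i ≤ m−1 and every pair of distinct j, j' ∈ Z/nZ, the Cartesian product P_m □ C_n has a 2-factor consisting of two cycles that separates the pair {u_{i,j}, u_{i,j'}}. -/

import Mathlib

open SimpleGraph

/-- `H` is a 2-factor of `X`: a spanning subgraph of `X` (on the same vertex set)
in which every vertex has valency 2. -/
def IsTwoFactor {V : Type*} (X H : SimpleGraph V) : Prop :=
  H ≤ X ∧ ∀ v : V, (H.neighborSet v).ncard = 2

/-- The 2-factor `H` separates the vertex set `A`: every connected component (cycle)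
of `H` contains exactly one vertex of `A`; in particular `H` consists of exactly
`A.card` cycles, each containing exactly one vertex of `A`. -/
def SeparatesSet {V : Type*} (H : SimpleGraph V) (A : Finset V) : Prop :=
  ∀ C : H.ConnectedComponent, ∃! a : V, a ∈ A ∧ H.connectedComponentMk a = C

/-- A graph `X` is `k`-spanning cyclable if for every set `A` of `k` distinct vertices
there is a 2-factor of `X` consisting of `k` cycles such that each vertex of `A`
belongs to a distinct cycle. -/
def SpanningCyclable {V : Type*} (X : SimpleGraph V) (k : ℕ) : Prop :=
  ∀ A : Finset V, A.card = k → ∃ H : SimpleGraph V, IsTwoFactor X H ∧ SeparatesSet H A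

/-- The cycle `C_n` on vertex set `ZMod n`: `x` and `y` are adjacent iff `x - y ∈ {1, -1}`. -/
def cycleZMod (n : ℕ) : SimpleGraph (ZMod n) :=
  SimpleGraph.circulantGraph ({1, -1} : Set (ZMod n))

/-- The pseudo-Cartesian product `C_m □_ℓ C_n`: start with `P_m □ C_n` (columns indexed by
`Fin m`, rows by `ZMod n`) and add the edges from `u_{m-1,j}` to `u_{0,j+ℓ}`.
When `ℓ = 0` this is the Cartesian product `C_m □ C_n`. -/
def pseudoProd (m n : ℕ) (l : ZMod n) : SimpleGraph (Fin m × ZMod n) :=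
  SimpleGraph.fromRel (fun u v =>
    (u.1 = v.1 ∧ v.2 = u.2 + 1) ∨
    ((u.1 : ℕ) + 1 = (v.1 : ℕ) ∧ u.2 = v.2) ∨
    ((u.1 : ℕ) = m - 1 ∧ (v.1 : ℕ) = 0 ∧ v.2 = u.2 + l))

/-!
Cut the cylinder `P_m □ C_n` into two bands of consecutive rows, of even heights `2` and `n - 2`,
the first one starting at row `j`. Each band is a grid `P_m □ P_t` with `t` even, which has a
Hamiltonian "snake" cycle, so the two snakes form a 2-factor with one cycle per band. It separates
`u_{i,j}` from `u_{i,j'}` unless `j' = j + 1`, and in that case the roles of `j` and `j'` are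
exchanged.
-/

section TwoFactors

variable {V W U : Type*}

lemma isTwoFactor_map_equiv {X : SimpleGraph V} {G : SimpleGraph W} (e : W ≃ V)
    (hdeg : ∀ w, (G.neighborSet w).ncard = 2) (hX : ∀ a b, G.Adj a b → X.Adj (e a) (e b)) :
    IsTwoFactor X (G.map e) := by
  refine ⟨?_, fun v => ?_⟩
  · rintro _ _ ⟨-, a, b, hab, rfl, rfl⟩
    exact hX a b hab
  · rw [neighborSet_map_equiv, ← Equiv.image_eq_preimage_symm,
      Set.ncard_image_of_injective _ e.injective, hdeg]

lemma separatesSet_pair [DecidableEq V] {H : SimpleGraph V} {a b : V} (hab : ¬H.Reachable a b)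
    (hcover : ∀ v, H.Reachable a v ∨ H.Reachable b v) : SeparatesSet H {a, b} := by
  intro C
  induction C using ConnectedComponent.ind with | h v => ?_
  simp only [Finset.mem_insert, Finset.mem_singleton, ConnectedComponent.eq]
  rcases hcover v with ha | hb
  · refine ⟨a, ⟨.inl rfl, ha⟩, ?_⟩
    rintro x ⟨rfl | rfl, hx⟩
    · rfl
    · exact (hab (ha.trans hx.symm)).elim
  · refine ⟨b, ⟨.inr rfl, hb⟩, ?_⟩
    rintro x ⟨rfl | rfl, hx⟩
    · exact (hab (hx.trans hb.symm)).elim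
    · rfl

lemma separatesSet_map_sum [DecidableEq U] {G₁ : SimpleGraph V} {G₂ : SimpleGraph W}
    (h₁ : G₁.Preconnected) (h₂ : G₂.Preconnected) (e : V ⊕ W ≃ U) (v : V) (w : W) :
    SeparatesSet ((G₁ ⊕g G₂).map e) {e (.inl v), e (.inr w)} := by
  apply separatesSet_pair
  · exact fun h => not_reachable_sum_inl_inr v w ((Iso.map e _).reachable_iff.1 h)
  · intro u
    obtain ⟨x, rfl⟩ := e.surjective u
    rcases x with v' | w'
    · exact .inl ((Iso.map e _).reachable_iff.2 ((h₁ v v').map Embedding.sumInl.toHom))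
    · exact .inr ((Iso.map e _).reachable_iff.2 ((h₂ w w').map Embedding.sumInr.toHom))

end TwoFactors

section CycleZMod

variable {V : Type*}

lemma cycleZMod_adj {N : ℕ} {a b : ZMod N} :
    (cycleZMod N).Adj a b ↔ a ≠ b ∧ (b = a + 1 ∨ a = b + 1) := by
  simp only [cycleZMod, circulantGraph_adj, Set.mem_insert_iff, Set.mem_singleton_iff]
  grind

lemma cycleZMod_succ_eq_cycleGraph (k : ℕ) : cycleZMod (k + 1) = cycleGraph (k + 1) := by
  rw [cycleGraph_eq_circulantGraph, circulantGraph_eq_symm, cycleZMod, Set.insert_eq,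
    Set.neg_singleton]
  rfl

lemma cycleZMod_preconnected (N : ℕ) [NeZero N] : (cycleZMod N).Preconnected := by
  obtain ⟨k, rfl⟩ := Nat.exists_eq_succ_of_ne_zero (NeZero.ne N)
  rw [cycleZMod_succ_eq_cycleGraph]
  exact cycleGraph_preconnected

lemma ncard_neighborSet_cycleZMod {N : ℕ} (hN : 3 ≤ N) (v : ZMod N) :
    ((cycleZMod N).neighborSet v).ncard = 2 := by
  obtain ⟨k, rfl⟩ : ∃ k, N = k + 3 := ⟨N - 3, by omega⟩
  rw [cycleZMod_succ_eq_cycleGraph]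
  revert v
  show ∀ v : Fin (k + 3), ((cycleGraph (k + 3)).neighborSet v).ncard = 2
  intro v
  rw [← Nat.card_coe_set_eq, Nat.card_eq_fintype_card, card_neighborSet_eq_degree,
    cycleGraph_degree_three_le]

lemma adj_of_cycleZMod_adj {X : SimpleGraph V} {N : ℕ} {f : ZMod N → V}
    (hf : ∀ a, X.Adj (f a) (f (a + 1))) {a b : ZMod N} (h : (cycleZMod N).Adj a b) :
    X.Adj (f a) (f b) := by
  rcases (cycleZMod_adj.1 h).2 with rfl | rfl
  exacts [hf a, (hf b).symm]

end CycleZMod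

lemma mul_eq_add_sub_one_mul {m n : ℕ} (hm : 0 < m) : m * n = n + (m - 1) * n := by
  obtain ⟨k, rfl⟩ : ∃ k, m = k + 1 := ⟨m - 1, by omega⟩
  rw [Nat.add_sub_cancel, Nat.succ_mul, Nat.add_comm]

abbrev grid : SimpleGraph (ℕ × ℕ) := hasse ℕ □ hasse ℕ

lemma grid_adj_iff {p q : ℕ × ℕ} : grid.Adj p q ↔
    ((p.1 + 1 = q.1 ∨ q.1 + 1 = p.1) ∧ p.2 = q.2) ∨
      ((p.2 + 1 = q.2 ∨ q.2 + 1 = p.2) ∧ p.1 = q.1) := by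
  simp only [boxProd_adj, hasse_adj, Nat.covBy_iff_add_one_eq]

/-- The `u`-th vertex, `u < m * t`, of a Hamiltonian cycle of the grid `[0, m) × [0, t)` for even
`t`: up the column `x = 0`, then back down row by row through `x = 1, …, m - 1`, alternating
direction. -/
def snake (m t u : ℕ) : ℕ × ℕ :=
  if u < t then (0, u)
  else
    ((if (u - t) / (m - 1) % 2 = 0 then (u - t) % (m - 1) + 1 else m - 1 - (u - t) % (m - 1)),
      t - 1 - (u - t) / (m - 1))

namespace snake

variable {m t : ℕ}

lemma of_lt {u : ℕ} (h : u < t) : snake m t u = (0, u) := if_pos h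

lemma of_decomp {r p : ℕ} (hp : p < m - 1) :
    snake m t (t + ((m - 1) * r + p)) = (if r % 2 = 0 then p + 1 else m - 1 - p, t - 1 - r) := by
  rw [snake, if_neg (by omega), Nat.add_sub_cancel_left, Nat.mul_add_div (by omega),
    Nat.mul_add_mod, Nat.div_eq_of_lt hp, Nat.mod_eq_of_lt hp, Nat.add_zero]

lemma exists_decomp (hm : 2 ≤ m) {u : ℕ} (h₁ : t ≤ u) (h₂ : u < m * t) :
    ∃ r p, r < t ∧ p < m - 1 ∧ u = t + ((m - 1) * r + p) := by
  have hmt := mul_eq_add_sub_one_mul (n := t) (by omega : 0 < m)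
  refine ⟨(u - t) / (m - 1), (u - t) % (m - 1), ?_, Nat.mod_lt _ (by omega), ?_⟩
  · rw [Nat.div_lt_iff_lt_mul (by omega), Nat.mul_comm]; omega
  · rw [Nat.div_add_mod]; omega

lemma mapsTo (hm : 2 ≤ m) :
    Set.MapsTo (snake m t) (Set.Iio (m * t)) (Set.Iio m ×ˢ Set.Iio t) := by
  intro u hu
  rw [Set.mem_Iio] at hu
  rw [Set.mem_prod, Set.mem_Iio, Set.mem_Iio]
  by_cases h : u < t
  · rw [of_lt h]; exact ⟨by omega, h⟩
  · obtain ⟨r, p, hr, hp, rfl⟩ := exists_decomp hm (by omega) hu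
    rw [of_decomp hp]
    split_ifs <;> exact ⟨by omega, by omega⟩

lemma injOn (hm : 2 ≤ m) : Set.InjOn (snake m t) (Set.Iio (m * t)) := by
  intro u hu v hv h
  rw [Set.mem_Iio] at hu hv
  by_cases hut : u < t <;> by_cases hvt : v < t
  · rwa [of_lt hut, of_lt hvt, Prod.mk.injEq, eq_self, true_and] at h
  · obtain ⟨r, p, -, hp, rfl⟩ := exists_decomp hm (by omega) hv
    have hx := congrArg Prod.fst h
    rw [of_lt hut, of_decomp hp] at hx
    split_ifs at hx; omega
  · obtain ⟨r, p, -, hp, rfl⟩ := exists_decomp hm (by omega) hu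
    have hx := congrArg Prod.fst h
    rw [of_lt hvt, of_decomp hp] at hx
    split_ifs at hx; omega
  · obtain ⟨r, p, hr, hp, rfl⟩ := exists_decomp hm (by omega) hu
    obtain ⟨r', p', hr', hp', rfl⟩ := exists_decomp hm (by omega) hv
    rw [of_decomp hp, of_decomp hp', Prod.mk.injEq] at h
    obtain rfl : r = r' := by omega
    split_ifs at h <;> omega

lemma adj_succ (hm : 2 ≤ m) {u : ℕ} (hu : u + 1 < m * t) :
    grid.Adj (snake m t u) (snake m t (u + 1)) := by
  rw [grid_adj_iff]
  by_cases h : u + 1 < t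
  · rw [of_lt (by omega), of_lt h]; omega
  by_cases h' : u + 1 = t
  · have hstart : snake m t t = (1, t - 1) := by
      simpa using of_decomp (m := m) (t := t) (r := 0) (p := 0) (by omega)
    rw [of_lt (by omega), h', hstart]; omega
  obtain ⟨r, p, -, hp, rfl⟩ := exists_decomp hm (by omega) (by omega : u < m * t)
  rw [of_decomp hp]
  by_cases hp' : p + 1 < m - 1
  · rw [show t + ((m - 1) * r + p) + 1 = t + ((m - 1) * r + (p + 1)) by omega, of_decomp hp']
    split_ifs <;> omega
  · have hnext : t + ((m - 1) * r + p) + 1 = t + ((m - 1) * (r + 1) + 0) := by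
      rw [Nat.mul_succ]; omega
    have hrt : r + 1 < t := by
      have hmt := mul_eq_add_sub_one_mul (n := t) (by omega : 0 < m)
      exact Nat.lt_of_mul_lt_mul_left (a := m - 1) (by omega)
    rw [hnext, of_decomp (by omega)]
    split_ifs <;> omega

lemma last (hm : 2 ≤ m) (ht : 2 ≤ t) (hte : Even t) : snake m t (m * t - 1) = (1, 0) := by
  have hmt := mul_eq_add_sub_one_mul (n := t) (by omega : 0 < m)
  have hlast : m * t - 1 = t + ((m - 1) * (t - 1) + (m - 2)) := by
    rw [Nat.mul_sub_one]
    have := Nat.le_mul_of_pos_right (m - 1) (by omega : 0 < t)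
    omega
  rw [hlast, of_decomp (by omega), if_neg (by rcases hte with ⟨k, rfl⟩; omega)]
  ext <;> dsimp only <;> omega

lemma adj_val_add_one (hm : 2 ≤ m) (ht : 2 ≤ t) (hte : Even t) (a : ZMod (m * t)) :
    grid.Adj (snake m t a.val) (snake m t (a + 1).val) := by
  have hmt : 4 ≤ m * t := Nat.mul_le_mul hm ht
  have : NeZero (m * t) := ⟨by omega⟩
  have ha := ZMod.val_lt a
  rw [ZMod.val_add, ZMod.val_one'' (by omega)]
  by_cases h : a.val + 1 < m * t
  · rw [Nat.mod_eq_of_lt h]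
    exact adj_succ hm h
  · rw [show a.val + 1 = m * t by omega, Nat.mod_self, show a.val = m * t - 1 by omega,
      last hm ht hte, of_lt (by omega), grid_adj_iff]
    omega

end snake

def bandVertex (m n : ℕ) [NeZero m] (j₀ : ZMod n) (p : ℕ × ℕ) : Fin m × ZMod n :=
  (Fin.ofNat m p.1, j₀ + p.2)

section bandVertex

variable {m n : ℕ} [NeZero m] {j₀ : ZMod n} {p q : ℕ × ℕ}

lemma val_bandVertex_fst (hp : p.1 < m) : (bandVertex m n j₀ p).1.val = p.1 :=
  (Fin.val_ofNat _ _).trans (Nat.mod_eq_of_lt hp)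

lemma bandVertex_adj (hn : n ≠ 1) (hp : p.1 < m) (hq : q.1 < m)
    (h : grid.Adj p q) :
    (pathGraph m □ cycleZMod n).Adj (bandVertex m n j₀ p) (bandVertex m n j₀ q) := by
  have h1 : (1 : ZMod n) ≠ 0 := fun h => by simpa [ZMod.val_one'' hn] using congrArg ZMod.val h
  rw [grid_adj_iff] at h
  rw [boxProd_adj, pathGraph_adj, cycleZMod_adj, Fin.ext_iff, val_bandVertex_fst hp,
    val_bandVertex_fst hq]
  obtain ⟨x, y⟩ := p
  obtain ⟨x', y'⟩ := q
  simp only [bandVertex] at h ⊢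
  rcases h with ⟨hx, rfl⟩ | ⟨hy, rfl⟩
  · exact .inl ⟨hx, rfl⟩
  · refine .inr ⟨?_, rfl⟩
    rcases hy with rfl | rfl <;> push_cast
    · exact ⟨fun h => h1 (by linear_combination -h), .inl (by ring)⟩
    · exact ⟨fun h => h1 (by linear_combination h), .inr (by ring)⟩

lemma bandVertex_injOn : Set.InjOn (bandVertex m n j₀) (Set.Iio m ×ˢ Set.Iio n) := by
  rintro p ⟨hp, hp'⟩ q ⟨hq, hq'⟩ h
  have hx := congrArg (fun v => v.1.val) h
  have hy := add_left_cancel (congrArg Prod.snd h)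
  simp only [val_bandVertex_fst hp, val_bandVertex_fst hq] at hx
  rw [ZMod.natCast_eq_natCast_iff', Nat.mod_eq_of_lt hp', Nat.mod_eq_of_lt hq'] at hy
  exact Prod.ext hx hy

lemma bandVertex_val (i : Fin m) (y : ℕ) : bandVertex m n j₀ (i.val, y) = (i, j₀ + y) :=
  Prod.ext (Fin.ext (val_bandVertex_fst i.isLt)) rfl

end bandVertex

lemma grid_adj_shift {p q : ℕ × ℕ} (s : ℕ) (h : grid.Adj p q) :
    grid.Adj (p.1, s + p.2) (q.1, s + q.2) := by
  rw [grid_adj_iff] at h ⊢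
  omega

def twoSnakes (m s t : ℕ) : ZMod (m * s) ⊕ ZMod (m * t) → ℕ × ℕ :=
  Sum.elim (fun a => snake m s a.val) (fun b => ((snake m t b.val).1, s + (snake m t b.val).2))

namespace twoSnakes

variable {m s t : ℕ}

lemma mem_Iio_prod_Iio (hm : 2 ≤ m) (hs : 2 ≤ s) (ht : 2 ≤ t)
    (x : ZMod (m * s) ⊕ ZMod (m * t)) : twoSnakes m s t x ∈ Set.Iio m ×ˢ Set.Iio (s + t) := by
  have : NeZero (m * s) := ⟨by positivity⟩
  have : NeZero (m * t) := ⟨by positivity⟩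
  rcases x with a | b
  · have := snake.mapsTo hm (ZMod.val_lt a)
    simp only [twoSnakes, Sum.elim_inl, Set.mem_prod, Set.mem_Iio] at this ⊢
    omega
  · have := snake.mapsTo hm (ZMod.val_lt b)
    simp only [twoSnakes, Sum.elim_inr, Set.mem_prod, Set.mem_Iio] at this ⊢
    omega

lemma snd_lt_iff (hm : 2 ≤ m) (hs : 2 ≤ s) (x : ZMod (m * s) ⊕ ZMod (m * t)) :
    (twoSnakes m s t x).2 < s ↔ x.isLeft := by
  have : NeZero (m * s) := ⟨by positivity⟩
  rcases x with a | b
  · simpa [twoSnakes] using (snake.mapsTo hm (ZMod.val_lt a)).2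
  · simp [twoSnakes]

lemma injective (hm : 2 ≤ m) (hs : 2 ≤ s) (ht : 2 ≤ t) :
    Function.Injective (twoSnakes m s t) := by
  have : NeZero (m * s) := ⟨by positivity⟩
  have : NeZero (m * t) := ⟨by positivity⟩
  rintro (a | b) (a' | b') h
  · exact congrArg _ (ZMod.val_injective _ (snake.injOn hm (ZMod.val_lt a) (ZMod.val_lt a') h))
  · have := (snd_lt_iff (t := t) hm hs (.inl a)).2 rfl
    rw [h, snd_lt_iff hm hs] at this
    simp at this
  · have := (snd_lt_iff (t := t) hm hs (.inl a')).2 rfl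
    rw [← h, snd_lt_iff hm hs] at this
    simp at this
  · simp only [twoSnakes, Sum.elim_inr, Prod.mk.injEq, Nat.add_left_cancel_iff] at h
    exact congrArg _ (ZMod.val_injective _
      (snake.injOn hm (ZMod.val_lt b) (ZMod.val_lt b') (Prod.ext h.1 h.2)))

lemma adj (hm : 2 ≤ m) (hs : 2 ≤ s) (ht : 2 ≤ t) (hse : Even s) (hte : Even t)
    {x x' : ZMod (m * s) ⊕ ZMod (m * t)} (h : (cycleZMod (m * s) ⊕g cycleZMod (m * t)).Adj x x') :
    grid.Adj (twoSnakes m s t x) (twoSnakes m s t x') := by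
  rcases x with a | b <;> rcases x' with a' | b'
  · exact adj_of_cycleZMod_adj (snake.adj_val_add_one hm hs hse) (sum_adj_inl.1 h)
  · exact (not_adj_sum_inl_inr a b' h).elim
  · exact (not_adj_sum_inl_inr a' b h.symm).elim
  · exact adj_of_cycleZMod_adj (fun b => grid_adj_shift s (snake.adj_val_add_one hm ht hte b))
      (sum_adj_inr.1 h)

end twoSnakes

lemma bijective_bandVertex_comp_twoSnakes {m s t : ℕ} [NeZero m] (hm : 2 ≤ m) (hs : 2 ≤ s)
    (ht : 2 ≤ t) (j₀ : ZMod (s + t)) :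
    Function.Bijective (bandVertex m (s + t) j₀ ∘ twoSnakes m s t) := by
  have : NeZero (m * s) := ⟨by positivity⟩
  have : NeZero (m * t) := ⟨by positivity⟩
  have : NeZero (s + t) := ⟨by positivity⟩
  refine (Fintype.bijective_iff_injective_and_card _).2 ⟨fun x x' h => ?_, ?_⟩
  · have hx := twoSnakes.mem_Iio_prod_Iio hm hs ht x
    have hx' := twoSnakes.mem_Iio_prod_Iio hm hs ht x'
    exact twoSnakes.injective hm hs ht (bandVertex_injOn hx hx' h)
  · simp only [Fintype.card_sum, Fintype.card_prod, ZMod.card, Fintype.card_fin]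
    ring

theorem exists_twoFactor_separating_bands {m s t : ℕ} (hm : 2 ≤ m) (hs : 2 ≤ s) (ht : 2 ≤ t)
    (hse : Even s) (hte : Even t) (j₀ : ZMod (s + t)) (i i' : Fin m) {y y' : ℕ} (hy : y < s)
    (hy' : y' < t) :
    ∃ H, IsTwoFactor (pathGraph m □ cycleZMod (s + t)) H ∧
      SeparatesSet H {(i, j₀ + y), (i', j₀ + (s + y' : ℕ))} := by
  have : NeZero m := ⟨by positivity⟩
  have : NeZero (m * s) := ⟨by positivity⟩
  have : NeZero (m * t) := ⟨by positivity⟩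
  let e := Equiv.ofBijective _ (bijective_bandVertex_comp_twoSnakes hm hs ht j₀)
  have hpre (p : ℕ × ℕ) (h₁ : p.1 < m) (h₂ : p.2 < s + t) : ∃ x, twoSnakes m s t x = p := by
    obtain ⟨x, hx⟩ := e.surjective (bandVertex m (s + t) j₀ p)
    have hxlt := twoSnakes.mem_Iio_prod_Iio hm hs ht x
    exact ⟨x, bandVertex_injOn hxlt ⟨h₁, h₂⟩ hx⟩
  obtain ⟨x, hx⟩ := hpre (i, y) i.isLt (by omega)
  obtain ⟨x', hx'⟩ := hpre (i', s + y') i'.isLt (by omega)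
  obtain ⟨a, rfl⟩ := Sum.isLeft_iff.1 ((twoSnakes.snd_lt_iff hm hs x).1 (hx ▸ hy))
  obtain ⟨b, rfl⟩ := Sum.isRight_iff.1 (Sum.not_isLeft.1
    (mt (twoSnakes.snd_lt_iff hm hs x').2 (by rw [hx']; omega)))
  refine ⟨(cycleZMod (m * s) ⊕g cycleZMod (m * t)).map e, isTwoFactor_map_equiv e ?_ ?_, ?_⟩
  · rintro (a | b)
    · rw [neighborSet_sum_inl, Set.ncard_image_of_injective _ Sum.inl_injective]
      exact ncard_neighborSet_cycleZMod (by nlinarith) a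
    · rw [neighborSet_sum_inr, Set.ncard_image_of_injective _ Sum.inr_injective]
      exact ncard_neighborSet_cycleZMod (by nlinarith) b
  · exact fun x x' h => bandVertex_adj (by omega) (twoSnakes.mem_Iio_prod_Iio hm hs ht x).1
      (twoSnakes.mem_Iio_prod_Iio hm hs ht x').1 (twoSnakes.adj hm hs ht hse hte h)
  · rw [← bandVertex_val, ← bandVertex_val, ← hx, ← hx']
    exact separatesSet_map_sum (cycleZMod_preconnected _) (cycleZMod_preconnected _) e a b

/-- For `m ≥ 3` and even `n ≥ 4`, any two distinct vertices in the same
column of `P_m □ C_n` are separated by a 2-factor consisting of two cycles. -/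
theorem statement_5 (m n : ℕ) (hm : 3 ≤ m) (hn : 4 ≤ n) (heven : Even n)
    (i : Fin m) (j j' : ZMod n) (hjj : j ≠ j') :
    ∃ H, IsTwoFactor (pathGraph m □ cycleZMod n) H ∧
      SeparatesSet H {(i, j), (i, j')} := by
  obtain ⟨t, rfl⟩ : ∃ t, n = 2 + t := ⟨n - 2, by omega⟩
  have : NeZero (2 + t) := ⟨by omega⟩
  wlog hd : 2 ≤ (j' - j).val generalizing j j'
  · have hval : (j' - j).val = 1 := by
      have := (ZMod.val_eq_zero (j' - j)).not.2 (sub_ne_zero.2 hjj.symm)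
      omega
    have hd' : 2 ≤ (j - j').val := by
      rw [← neg_sub, ZMod.neg_val, if_neg (sub_ne_zero.2 hjj.symm), hval]
      omega
    simpa only [Finset.pair_comm] using this j' j hjj.symm hd'
  obtain ⟨H, hH, hsep⟩ := exists_twoFactor_separating_bands (m := m) (by omega) le_rfl (by omega)
    even_two ((Nat.even_add.1 heven).1 even_two) j i i (y := 0) (y' := (j' - j).val - 2)
    (by omega) (by have := ZMod.val_lt (j' - j); omega)
  rw [Nat.cast_zero, add_zero, Nat.add_sub_cancel' hd, ZMod.natCast_zmod_val, add_sub_cancel]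
    at hsep
  exact ⟨H, hH, hsep⟩
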